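/- Suppose $F : [0,\infty) \to [0,\infty)$ is a non-decreasing right-continuous function with $F(0) = 0$ and there exist constants $C > 0$ and $\alpha > 0$ such that $F(\lambda) \leq C\lambda^\alpha$ for all $\lambda \in [0,1]$. Then $\int_{0^+}^1 \log\lambda\, dF(\lambda) > -\infty$, where $dF$ denotes the Lebesgue-Stieltjes measure associated to $F$. -/

import Mathlib

open MeasureTheory Real Set

/-- **Polynomial bound on the spectral density implies determinant class.**
If `F : [0,∞) → [0,∞)` is non-decreasing and right-continuous (a Stieltjes function) with
`F(0) = 0` and `F(λ) ≤ C λ^α` on `[0,1]` for constants `C > 0`, `α > 0`, then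
`∫_{0^+}^1 log λ dF(λ) > -∞`, i.e. `∫_{(0,1]} (-log λ) dF(λ) < ∞` for the
Lebesgue–Stieltjes measure `dF` associated to `F`. -/
theorem polynomial_bound_implies_log_integrable
    (F : StieltjesFunction ℝ) (hF0 : F 0 = 0)
    (C α : ℝ) (hC : 0 < C) (hα : 0 < α)
    (hbound : ∀ l ∈ Set.Icc (0 : ℝ) 1, F l ≤ C * l ^ α) :
    ∫⁻ l in Set.Ioc (0 : ℝ) 1, ENNReal.ofReal (-Real.log l) ∂F.measure ≠ ⊤ := by
  set μ := F.measure.restrict (Set.Ioc (0 : ℝ) 1) with hμ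
  have hnn : 0 ≤ᵐ[μ] fun l : ℝ => -Real.log l := by
    rw [hμ]
    filter_upwards [ae_restrict_mem measurableSet_Ioc] with l hl
    simpa using Real.log_nonpos hl.1.le hl.2
  have hmble : AEMeasurable (fun l : ℝ => -Real.log l) μ :=
    Real.measurable_log.neg.aemeasurable
  have key := lintegral_eq_lintegral_meas_lt μ hnn hmble
  have hset : MeasurableSet {a : ℝ | (0:ℝ) < -Real.log a} := by
    exact Real.measurable_log.neg measurableSet_Ioi
  have hbd : ∀ t ∈ Set.Ioi (0 : ℝ),
      μ {a : ℝ | t < -Real.log a} ≤ ENNReal.ofReal (C * Real.exp (-α * t)) := by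
    intro t ht
    have htpos : (0:ℝ) < t := ht
    have hms : MeasurableSet {a : ℝ | t < -Real.log a} :=
      measurableSet_lt measurable_const Real.measurable_log.neg
    have hsub : {a : ℝ | t < -Real.log a} ∩ Set.Ioc (0 : ℝ) 1
        ⊆ Set.Ioc 0 (Real.exp (-t)) := by
      rintro a ⟨ha1, ha2, _⟩
      have hlog : Real.log a < -t := by
        have : t < -Real.log a := ha1
        linarith
      refine ⟨ha2, ?_⟩
      have := Real.exp_lt_exp.mpr hlog
      rw [Real.exp_log ha2] at this
      exact this.le
    have h1 : μ {a : ℝ | t < -Real.log a} ≤ F.measure (Set.Ioc 0 (Real.exp (-t))) := by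
      rw [hμ, Measure.restrict_apply hms]
      exact measure_mono hsub
    have h2 : F.measure (Set.Ioc 0 (Real.exp (-t)))
        = ENNReal.ofReal (F (Real.exp (-t))) := by
      rw [F.measure_Ioc, hF0, sub_zero]
    have hmem : Real.exp (-t) ∈ Set.Icc (0:ℝ) 1 :=
      ⟨(Real.exp_pos _).le, Real.exp_le_one_iff.mpr (by linarith)⟩
    have h3 : F (Real.exp (-t)) ≤ C * Real.exp (-α * t) := by
      have := hbound _ hmem
      have hrw : (Real.exp (-t)) ^ α = Real.exp (-α * t) := by
        rw [← Real.exp_log (Real.exp_pos (-t)), Real.log_exp, ← Real.exp_mul]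
        ring_nf
      rw [hrw] at this
      exact this
    calc μ {a : ℝ | t < -Real.log a} ≤ ENNReal.ofReal (F (Real.exp (-t))) := h2 ▸ h1
      _ ≤ ENNReal.ofReal (C * Real.exp (-α * t)) := ENNReal.ofReal_le_ofReal h3
  have hint : IntegrableOn (fun t : ℝ => C * Real.exp (-α * t)) (Set.Ioi 0) :=
    (exp_neg_integrableOn_Ioi 0 hα).const_mul C
  have hfin : ∫⁻ t in Set.Ioi (0:ℝ), ENNReal.ofReal (C * Real.exp (-α * t)) < ⊤ :=
    hint.lintegral_lt_top
  have : ∫⁻ l in Set.Ioc (0 : ℝ) 1, ENNReal.ofReal (-Real.log l) ∂F.measure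
      ≤ ∫⁻ t in Set.Ioi (0:ℝ), ENNReal.ofReal (C * Real.exp (-α * t)) := by
    rw [show (∫⁻ l in Set.Ioc (0 : ℝ) 1, ENNReal.ofReal (-Real.log l) ∂F.measure)
        = ∫⁻ l, ENNReal.ofReal (-Real.log l) ∂μ from rfl, key]
    exact setLIntegral_mono' measurableSet_Ioi hbd
  exact (lt_of_le_of_lt this hfin).ne
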